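/- arXiv:2310.18470 — 5 statements merged into one kernel-verified Lean document; each statement's English description precedes it below -/
import Mathlib

section
/- Assume p = 2 and d = d2 > d1. If j2 = 1, then S_{f1,f2} contains an absolutely irreducible component defined over 𝔽_q. -/
open MvPolynomial Finset

/-- The homogeneous polynomial `F` defining the hypersurface `S_{f1,f2}` for
`f1(X,Y) = Y + ∑ a_i X^i` and `f2(X,Y) = ∑ b_{i,j} X^i Y^j`, with
`d = max (deg f1) (deg f2)`. -/
noncomputable def SpolySpec {F : Type} [Field F] (a : ℕ → F) (b : ℕ → ℕ → F) (d : ℕ) :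
    MvPolynomial (Fin 5) F :=
  (X 2 - X 4) ^ 2 * X 0 ^ (d - 1)
  - (X 2 - X 4) * (∑ i ∈ Finset.range (d + 1), C (a i) * (X 3 ^ i - X 1 ^ i) * X 0 ^ (d - i))
  - (X 1 - X 3) * (∑ i ∈ Finset.range (d + 1), ∑ j ∈ Finset.range (d + 1),
      C (b i j) * (X 3 ^ i * X 4 ^ j - X 1 ^ i * X 2 ^ j) * X 0 ^ (d - i - j))

/-- `P` has a nonconstant divisor over `F` that stays irreducible over the algebraic
closure, i.e. the hypersurface `P = 0` contains an absolutely irreducible component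
defined over `F`. -/
def HasAbsIrredComp {F : Type} [Field F] (P : MvPolynomial (Fin 5) F) : Prop :=
  ∃ g : MvPolynomial (Fin 5) F, g ∣ P ∧ g.totalDegree ≠ 0 ∧
    Irreducible (MvPolynomial.map (algebraMap F (AlgebraicClosure F)) g)

/-!
In characteristic 2 the polynomial `F` is a quadratic `X0^(d-1) X4^2 + q X4 + r` in `X4` over
`K[X0, X1, X2, X3]`, `K` the algebraic closure. It is primitive: `X0` cannot divide both `q` and
the `X2`-free part of `r`, as one sees at `X0 = X1 = X2 = 0`, where the top-degree coefficients
`b_{d,0}` or `b_{d-1,1}` survive. A splitting `(αX4 + β)(γX4 + δ)` would give `z = αδ` with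
`z^2 + X0^(d-1) r = q z`. Since `r` is itself a quadratic `X0^(d-1) X2^2 + t X2 + s` in `X2` and
`q, t, s` do not involve `X2`, the substitution `Y = z + X0^(d-1) X2` turns this, in
characteristic 2, into `Y^2 + q Y = X0^(d-1) ((t - q) X2 + s)`, impossible by degree in `X2`
because `t ≠ q`. So `F` is absolutely irreducible and is its own component.
-/

namespace Polynomial

variable {R : Type*} [CommRing R] [IsDomain R]

-- A factorisation `(αX + β)(γX + δ)` would make `z = αδ` violate `hroot`.
theorem irreducible_quadratic {p q r : R} (hp : p ≠ 0)
    (hprim : ∀ g, g ∣ p → g ∣ q → g ∣ r → IsUnit g)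
    (hroot : ∀ z, z * z + p * r ≠ q * z) :
    Irreducible (C p * X ^ 2 + C q * X + C r) := by
  set P := C p * X ^ 2 + C q * X + C r with hP
  have hdeg : P.natDegree = 2 := natDegree_quadratic hp
  have hP0 : P ≠ 0 := fun h => by simp [h] at hdeg
  have unit_of_natDegree_eq_zero : ∀ G H, P = G * H → G.natDegree = 0 → IsUnit G := by
    intro G H hGH hG
    obtain ⟨g, rfl⟩ := natDegree_eq_zero.mp hG
    have hdvd : ∀ k, g ∣ P.coeff k := (C_dvd_iff_dvd_coeff g P).mp (hGH ▸ dvd_mul_right _ _)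
    exact isUnit_C.mpr (hprim g (by simpa [hP] using hdvd 2) (by simpa [hP] using hdvd 1)
      (by simpa [hP] using hdvd 0))
  refine ⟨fun hu => by simp [natDegree_eq_zero_of_isUnit hu] at hdeg, fun G H hGH => ?_⟩
  have hG0 : G ≠ 0 := by rintro rfl; exact hP0 (by rw [hGH, zero_mul])
  have hH0 : H ≠ 0 := by rintro rfl; exact hP0 (by rw [hGH, mul_zero])
  have hsum : G.natDegree + H.natDegree = 2 := by rw [← natDegree_mul hG0 hH0, ← hGH, hdeg]
  rcases (by omega : G.natDegree = 0 ∨ H.natDegree = 0 ∨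
      (G.natDegree = 1 ∧ H.natDegree = 1)) with hG | hH | ⟨hG, hH⟩
  · exact .inl (unit_of_natDegree_eq_zero G H hGH hG)
  · exact .inr (unit_of_natDegree_eq_zero H G (by rw [hGH, mul_comm]) hH)
  · exfalso
    obtain ⟨α, β, rfl⟩ := exists_eq_X_add_C_of_natDegree_le_one hG.le
    obtain ⟨γ, δ, rfl⟩ := exists_eq_X_add_C_of_natDegree_le_one hH.le
    have hexp : P = C (α * γ) * X ^ 2 + C (α * δ + β * γ) * X + C (β * δ) := by
      rw [hGH]; simp only [C_mul, C_add]; ring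
    have h2 := congrArg (coeff · 2) hexp
    have h1 := congrArg (coeff · 1) hexp
    have h0 := congrArg (coeff · 0) hexp
    simp only [hP, coeff_add, coeff_C_mul, coeff_X_pow, coeff_X, coeff_C] at h2 h1 h0
    norm_num at h2 h1 h0
    exact hroot (α * δ) (by rw [h2, h1, h0]; ring)

theorem mul_self_add_C_mul_ne_linear {q r s : R} (hr : r ≠ 0) (Y : R[X]) :
    Y * Y + C q * Y ≠ C r * X + C s := by
  intro h
  have hlin : (Y * Y + C q * Y).natDegree = 1 := h ▸ natDegree_linear hr
  rcases Nat.eq_zero_or_pos Y.natDegree with hY | hY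
  · obtain ⟨c, rfl⟩ := natDegree_eq_zero.mp hY
    rw [← C_mul, ← C_mul, ← C_add, natDegree_C] at hlin
    exact zero_ne_one hlin
  · have hY0 : Y ≠ 0 := by rintro rfl; simp at hY
    have hsq : (Y * Y).natDegree = Y.natDegree + Y.natDegree := natDegree_mul hY0 hY0
    have hlt : (C q * Y).natDegree < (Y * Y).natDegree :=
      (natDegree_C_mul_le q Y).trans_lt (by omega)
    rw [natDegree_add_eq_left_of_natDegree_lt hlt, hsq] at hlin
    omega

-- Put `Y = z + pX`: in characteristic 2 the terms in `X ^ 2` cancel and the equation becomes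
-- `Y * Y + C q * Y = C (p * (t - q)) * X + C (p * s)`.
theorem mul_self_add_C_mul_quadratic_ne [CharP R 2] {p q t s : R} (hp : p ≠ 0) (hqt : t ≠ q)
    (z : R[X]) : z * z + C p * (C p * X ^ 2 + C t * X + C s) ≠ C q * z := by
  intro h
  have h2 : (2 : R[X]) = 0 := CharTwo.two_eq_zero
  refine mul_self_add_C_mul_ne_linear (q := q) (s := p * s)
    (mul_ne_zero hp (sub_ne_zero.mpr hqt)) (z + C p * X) ?_
  simp only [C_mul, C_sub]
  linear_combination h + (C q * z - C p * C t * X - C p * C s + C p * X * z + C p * X * C q) * h2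

end Polynomial

theorem isUnit_or_dvd_of_dvd_prime_pow {M : Type*} [CommMonoidWithZero M] [IsCancelMulZero M]
    {π g : M} (hπ : Prime π) {k : ℕ} (h : g ∣ π ^ k) : IsUnit g ∨ π ∣ g := by
  obtain ⟨_ | i, -, hi⟩ := (dvd_prime_pow hπ k).mp h
  · exact .inl (associated_one_iff_isUnit.mp (by simpa using hi))
  · exact .inr ((dvd_pow_self π i.succ_ne_zero).trans hi.symm.dvd)

theorem Finset.sum_range_eq_add_of_eq_zero {M : Type*} [AddCommMonoid M] {f : ℕ → M} {n : ℕ}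
    (hn : 2 ≤ n) (hf : ∀ j, 2 ≤ j → f j = 0) : ∑ j ∈ range n, f j = f 0 + f 1 := by
  rw [← sum_subset (range_subset_range.mpr hn) fun j _ hj => hf j (by simp at hj; omega)]
  simp [sum_range_succ]

section Coordinates

variable {K : Type} [Field K]

/- The variables `X 0, X 1, X 2` of `MvPolynomial (Fin 3) K` stand for the paper's `X0, X1, X3`
(hence `embX013`); `coeffX4`, `coeffX2`, `coeffOne` are the coefficients of `F` as a polynomial
in `X4` and `X2`. -/
noncomputable def homDiff (c : ℕ → K) (d : ℕ) : MvPolynomial (Fin 3) K :=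
  ∑ i ∈ range (d + 1), C (c i) * (X 2 ^ i + X 1 ^ i) * X 0 ^ (d - i)

noncomputable def homSum (c : ℕ → K) (v : Fin 3) (d : ℕ) : MvPolynomial (Fin 3) K :=
  ∑ i ∈ range (d + 1), C (c i) * X v ^ i * X 0 ^ (d - i - 1)

noncomputable def coeffX4 (a : ℕ → K) (b : ℕ → ℕ → K) (d : ℕ) : MvPolynomial (Fin 3) K :=
  homDiff a d + (X 1 + X 2) * homSum (b · 1) 2 d

noncomputable def coeffX2 (a : ℕ → K) (b : ℕ → ℕ → K) (d : ℕ) : MvPolynomial (Fin 3) K :=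
  homDiff a d + (X 1 + X 2) * homSum (b · 1) 1 d

noncomputable def coeffOne (b : ℕ → ℕ → K) (d : ℕ) : MvPolynomial (Fin 3) K :=
  (X 1 + X 2) * homDiff (b · 0) d

def embX013 : Fin 3 → Fin 5 := ![0, 1, 3]

theorem SpolySpec_eq_quadratic [CharP K 2] (a : ℕ → K) {b : ℕ → ℕ → K} {d : ℕ} (hd : d ≠ 0)
    (hb : ∀ i j, b i j ≠ 0 → j ≤ 1) :
    SpolySpec a b d = rename embX013 (X 0 ^ (d - 1)) * X 4 ^ 2
      + rename embX013 (coeffX4 a b d) * X 4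
      + (rename embX013 (X 0 ^ (d - 1)) * X 2 ^ 2 + rename embX013 (coeffX2 a b d) * X 2
        + rename embX013 (coeffOne b d)) := by
  have hsplit : ∀ i, ∑ j ∈ range (d + 1),
      C (b i j) * ((X 3 : MvPolynomial (Fin 5) K) ^ i * X 4 ^ j - X 1 ^ i * X 2 ^ j)
        * X 0 ^ (d - i - j)
      = C (b i 0) * (X 3 ^ i - X 1 ^ i) * X 0 ^ (d - i)
        + (C (b i 1) * X 3 ^ i * X 0 ^ (d - i - 1) * X 4
          - C (b i 1) * X 1 ^ i * X 0 ^ (d - i - 1) * X 2) := by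
    intro i
    rw [Finset.sum_range_eq_add_of_eq_zero (by omega) fun j hj => by
      rw [show b i j = 0 by by_contra h; have := hb i j h; omega, map_zero, zero_mul, zero_mul]]
    simp only [pow_zero, pow_one, mul_one, Nat.sub_zero]
    ring
  have h2 : (2 : MvPolynomial (Fin 5) K) = 0 := CharTwo.two_eq_zero
  have e0 : embX013 0 = 0 := rfl
  have e1 : embX013 1 = 1 := rfl
  have e2 : embX013 2 = 3 := rfl
  simp only [SpolySpec, hsplit, sum_add_distrib, sum_sub_distrib, ← sum_mul]
  simp only [coeffX4, coeffX2, coeffOne, homDiff, homSum, map_add, map_mul, map_sum, map_pow,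
    rename_X, rename_C, e0, e1, e2, CharTwo.sub_eq_add]
  linear_combination (X 2 * X 4 * X 0 ^ (d - 1) : MvPolynomial (Fin 5) K) * h2

def splitVarsPerm : Equiv.Perm (Fin 5) := ⟨![2, 3, 1, 4, 0], ![4, 2, 0, 1, 3], by decide, by decide⟩

-- `X4 ↦ X`, `X2 ↦ C X`, and `X0, X1, X3` go to the constants `X 0, X 1, X 2`.
variable (K) in
noncomputable def splitVarsEquiv :
    MvPolynomial (Fin 5) K ≃ₐ[K] Polynomial (Polynomial (MvPolynomial (Fin 3) K)) :=
  (renameEquiv K splitVarsPerm).trans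
    ((finSuccEquiv K 4).trans (Polynomial.mapAlgEquiv (finSuccEquiv K 3)))

theorem splitVarsEquiv_X (i : Fin 5) :
    splitVarsEquiv K (X i) =
      Polynomial.map (finSuccEquiv K 3) (finSuccEquiv K 4 (X (splitVarsPerm i))) := by
  simp [splitVarsEquiv]

theorem splitVarsEquiv_X_four : splitVarsEquiv K (X 4) = Polynomial.X := by
  rw [splitVarsEquiv_X, show splitVarsPerm 4 = 0 from rfl, finSuccEquiv_X_zero, Polynomial.map_X]

theorem splitVarsEquiv_X_two : splitVarsEquiv K (X 2) = Polynomial.C Polynomial.X := by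
  rw [splitVarsEquiv_X, show splitVarsPerm 2 = Fin.succ 0 from rfl, finSuccEquiv_X_succ,
    Polynomial.map_C]
  exact congrArg Polynomial.C finSuccEquiv_X_zero

theorem splitVarsEquiv_rename (f : MvPolynomial (Fin 3) K) :
    splitVarsEquiv K (rename embX013 f) = Polynomial.C (Polynomial.C f) := by
  have hX : ∀ i : Fin 3,
      splitVarsEquiv K (X (embX013 i)) = Polynomial.C (Polynomial.C (X i)) := by
    intro i
    rw [splitVarsEquiv_X, show splitVarsPerm (embX013 i) = (i.succ).succ by fin_cases i <;> rfl,
      finSuccEquiv_X_succ, Polynomial.map_C]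
    exact congrArg Polynomial.C finSuccEquiv_X_succ
  have := congrArg (· f) (algHom_ext (A := Polynomial (Polynomial (MvPolynomial (Fin 3) K)))
    (f := (splitVarsEquiv K).toAlgHom.comp (rename embX013))
    (g := Polynomial.CAlgHom.comp Polynomial.CAlgHom) fun i => by simpa using hX i)
  simpa using this

theorem splitVarsEquiv_SpolySpec [CharP K 2] (a : ℕ → K) {b : ℕ → ℕ → K} {d : ℕ} (hd : d ≠ 0)
    (hb : ∀ i j, b i j ≠ 0 → j ≤ 1) :
    splitVarsEquiv K (SpolySpec a b d) =
      Polynomial.C (Polynomial.C (X 0 ^ (d - 1))) * Polynomial.X ^ 2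
        + Polynomial.C (Polynomial.C (coeffX4 a b d)) * Polynomial.X
        + Polynomial.C (Polynomial.C (X 0 ^ (d - 1)) * Polynomial.X ^ 2
          + Polynomial.C (coeffX2 a b d) * Polynomial.X + Polynomial.C (coeffOne b d)) := by
  rw [SpolySpec_eq_quadratic a hd hb]
  simp only [map_add, map_mul, map_pow, splitVarsEquiv_rename, splitVarsEquiv_X_four,
    splitVarsEquiv_X_two]

end Coordinates

section Evaluations

variable {K : Type} [Field K]

theorem aeval_homDiff (c : ℕ → K) {d : ℕ} (hd : d ≠ 0) :
    aeval (![0, 0, Polynomial.X] : Fin 3 → Polynomial K) (homDiff c d) =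
      Polynomial.C (c d) * Polynomial.X ^ d := by
  simp only [homDiff, map_sum, map_mul, map_add, map_pow, aeval_X, aeval_C]
  rw [sum_eq_single d (fun i hi hne => ?_) (by simp)]
  · simp [hd]
  · simp [zero_pow (show d - i ≠ 0 by simp at hi; omega)]

theorem aeval_homSum_two (c : ℕ → K) {d : ℕ} (hd : d ≠ 0) (hc : c d = 0) :
    aeval (![0, 0, Polynomial.X] : Fin 3 → Polynomial K) (homSum c 2 d) =
      Polynomial.C (c (d - 1)) * Polynomial.X ^ (d - 1) := by
  simp only [homSum, map_sum, map_mul, map_pow, aeval_X, aeval_C]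
  rw [sum_eq_single (d - 1) (fun i hi hne => ?_) (by simp)]
  · simp [show d - (d - 1) - 1 = 0 by omega]
  · rcases eq_or_ne i d with rfl | hid
    · simp [hc]
    · simp [zero_pow (show d - i - 1 ≠ 0 by simp at hi; omega)]

theorem aeval_homSum_one_at_one (c : ℕ → K) (d : ℕ) :
    aeval (![1, Polynomial.X, 0] : Fin 3 → Polynomial K) (homSum c 1 d) =
      ∑ i ∈ range (d + 1), Polynomial.C (c i) * Polynomial.X ^ i := by
  simp [homSum]

theorem aeval_homSum_two_at_one (c : ℕ → K) (d : ℕ) :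
    aeval (![1, Polynomial.X, 0] : Fin 3 → Polynomial K) (homSum c 2 d) = Polynomial.C (c 0) := by
  simp only [homSum, map_sum, map_mul, map_pow, aeval_X, aeval_C]
  rw [sum_eq_single 0 (fun i _ hi => by simp [hi]) (by simp)]
  simp

theorem not_X_zero_dvd_coeffX4_and_coeffOne (a : ℕ → K) {b : ℕ → ℕ → K} {d : ℕ} (hd : d ≠ 0)
    (ha : a d = 0) (hb : b d 1 = 0) (htop : b d 0 ≠ 0 ∨ b (d - 1) 1 ≠ 0) :
    ¬ (X 0 ∣ coeffX4 a b d ∧ X 0 ∣ coeffOne b d) := by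
  rintro ⟨⟨u, hu⟩, ⟨w, hw⟩⟩
  have h4 := congrArg (aeval (![0, 0, Polynomial.X] : Fin 3 → Polynomial K)) hu
  have h1 := congrArg (aeval (![0, 0, Polynomial.X] : Fin 3 → Polynomial K)) hw
  simp [coeffX4, coeffOne, aeval_homDiff _ hd, aeval_homSum_two (b · 1) hd hb, ha] at h4 h1
  tauto

theorem coeffX2_ne_coeffX4 (a : ℕ → K) {b : ℕ → ℕ → K} {d : ℕ} (hb01 : b 0 1 = 0)
    {i : ℕ} (hid : i ≤ d) (hi : b i 1 ≠ 0) : coeffX2 a b d ≠ coeffX4 a b d := by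
  intro h
  have h' := congrArg
    (fun f => (aeval (![1, Polynomial.X, 0] : Fin 3 → Polynomial K) f).coeff (i + 1)) h
  simp [coeffX2, coeffX4, aeval_homSum_one_at_one, aeval_homSum_two_at_one, hb01,
    Polynomial.finsetSum_coeff, Polynomial.coeff_X_pow] at h'
  exact hi (h' hid)

end Evaluations

theorem irreducible_SpolySpec {K : Type} [Field K] [CharP K 2] {a : ℕ → K} {b : ℕ → ℕ → K}
    {d : ℕ} (ha : ∀ i, a i ≠ 0 → i < d) (hb : ∀ i j, b i j ≠ 0 → i + j ≤ d)
    (hdeg : ∃ i j, i + j = d ∧ b i j ≠ 0) (hb1 : ∀ i j, b i j ≠ 0 → j ≤ 1)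
    (hlin : ∃ i, b i 1 ≠ 0) (hb01 : b 0 1 = 0) :
    Irreducible (SpolySpec a b d) := by
  obtain ⟨i₁, hi₁⟩ := hlin
  have hi₁d : i₁ + 1 ≤ d := hb _ _ hi₁
  have hd : d ≠ 0 := by omega
  have had : a d = 0 := by by_contra h; exact lt_irrefl d (ha d h)
  have hbd : b d 1 = 0 := by by_contra h; have := hb d 1 h; omega
  have htop : b d 0 ≠ 0 ∨ b (d - 1) 1 ≠ 0 := by
    obtain ⟨i, j, rfl, hne⟩ := hdeg
    obtain rfl | rfl : j = 0 ∨ j = 1 := by have := hb1 i j hne; omega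
    exacts [.inl hne, .inr (by simpa using hne)]
  rw [← MulEquiv.irreducible_iff (splitVarsEquiv K), splitVarsEquiv_SpolySpec a hd hb1]
  refine Polynomial.irreducible_quadratic (by simp) (fun g hgp hgq hgr => ?_)
    (Polynomial.mul_self_add_C_mul_quadratic_ne (pow_ne_zero _ (X_ne_zero 0))
      (coeffX2_ne_coeffX4 a hb01 (by omega) hi₁))
  rw [map_pow] at hgp
  refine (isUnit_or_dvd_of_dvd_prime_pow (Polynomial.prime_C_iff.mpr X_prime) hgp).resolve_right
    fun hX0 => not_X_zero_dvd_coeffX4_and_coeffOne a hd had hbd htop ⟨?_, ?_⟩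
  · simpa using (Polynomial.C_dvd_iff_dvd_coeff _ _).mp (hX0.trans hgq) 0
  · simpa using (Polynomial.C_dvd_iff_dvd_coeff _ _).mp (hX0.trans hgr) 0

theorem totalDegree_ne_zero_of_irreducible_map {σ F K : Type*} [Field F] [Field K]
    (φ : F →+* K) {P : MvPolynomial σ F} (h : Irreducible (map φ P)) : P.totalDegree ≠ 0 := by
  intro h0
  rw [totalDegree_eq_zero_iff_eq_C.mp h0, map_C] at h
  exact h.not_isUnit ((isUnit_iff_ne_zero.mpr fun h0 => h.ne_zero (by rw [h0, map_zero])).map C)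

theorem map_SpolySpec {F K : Type} [Field F] [Field K] (φ : F →+* K) (a : ℕ → F)
    (b : ℕ → ℕ → F) (d : ℕ) :
    map φ (SpolySpec a b d) = SpolySpec (φ ∘ a) (fun i j => φ (b i j)) d := by
  simp [SpolySpec, map_sub, map_mul, map_sum]

theorem stmt_7_general
    (p : ℕ)
    (F : Type) [Field F] [CharP F p]
    (a : ℕ → F) (b : ℕ → ℕ → F)
    (hb01 : b 0 1 = 0)
    (d1 d2 d : ℕ)
    (hd1ub : ∀ i, a i ≠ 0 → i ≤ d1)
    (hd2ub : ∀ i j, b i j ≠ 0 → i + j ≤ d2)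
    (hd2max : ∃ i j, i + j = d2 ∧ b i j ≠ 0)
    (hd : d = max d1 d2)
    (j2 : ℕ)
    (hj2ex : ∃ i, b i j2 ≠ 0) (hj2ub : ∀ i j, b i j ≠ 0 → j ≤ j2)
    (hp2 : p = 2) (hdd : d1 < d2) (hj2v : j2 = 1) :
    HasAbsIrredComp (SpolySpec a b d) := by
  subst hp2 hj2v
  obtain rfl : d = d2 := by omega
  have hirr : Irreducible (map (algebraMap F (AlgebraicClosure F)) (SpolySpec a b d)) := by
    rw [map_SpolySpec]
    refine irreducible_SpolySpec ?_ ?_ ?_ ?_ ?_ (by simp [hb01]) <;>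
      simp only [Function.comp_apply, ne_eq, map_eq_zero]
    · exact fun i hi => (hd1ub i hi).trans_lt hdd
    · exact hd2ub
    · exact hd2max
    · exact hj2ub
    · exact hj2ex
  exact ⟨_, dvd_rfl, totalDegree_ne_zero_of_irreducible_map _ hirr, hirr⟩

theorem stmt_7
    (p ℓ : ℕ) (hp : p.Prime) (hℓ : 0 < ℓ)
    (F : Type) [Field F] [Fintype F] [CharP F p]
    (hcard : Fintype.card F = p ^ ℓ)
    (a : ℕ → F) (b : ℕ → ℕ → F)
    (ha0 : a 0 = 0) (hb00 : b 0 0 = 0) (hb01 : b 0 1 = 0)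
    (d1 d2 d : ℕ)
    (hd1pos : 1 ≤ d1)
    (hd1ub : ∀ i, a i ≠ 0 → i ≤ d1)
    (hd1max : d1 ≠ 1 → a d1 ≠ 0)
    (hd2ub : ∀ i j, b i j ≠ 0 → i + j ≤ d2)
    (hd2max : ∃ i j, i + j = d2 ∧ b i j ≠ 0)
    (hd : d = max d1 d2)
    (j2 : ℕ)
    (hj2ex : ∃ i, b i j2 ≠ 0) (hj2ub : ∀ i j, b i j ≠ 0 → j ≤ j2)
    (hp2 : p = 2) (hdd : d1 < d2) (hj2v : j2 = 1) :
    HasAbsIrredComp (SpolySpec a b d) :=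
  stmt_7_general p F a b hb01 d1 d2 d hd1ub hd2ub hd2max hd j2 hj2ex hj2ub hp2 hdd hj2v
end

section
/- Assume p > 2 and d = d2 > d1. If j2 = 1, then S_{f1,f2} contains an absolutely irreducible component defined over 𝔽_q. -/
open MvPolynomial Finset

/-!
After the substitution `X₂ ↦ X₂ + X₄`, the assumption `j₂ = 1` makes `F` linear in `X₄`:
`F = Q + P X₄` with `P ≠ 0`. Over `𝔽̄_q` it therefore has an irreducible factor `g` of degree one
in `X₄`, and any two such factors are associated, since the cofactor of `g` has degree zero in
`X₄`. Once one coefficient of `g` is normalized to `1`, the `q`-power Frobenius, which fixes `F`,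
must fix `g`; so `g` and its cofactor have coefficients in `𝔽_q`.
-/

theorem FiniteField.mem_range_algebraMap_of_pow_card_eq {K L : Type*} [Field K] [Fintype K]
    [Field L] [Algebra K L] {x : L} (hx : x ^ Fintype.card K = x) :
    x ∈ (algebraMap K L).range := by
  have hsplits : (Polynomial.X ^ Fintype.card K - Polynomial.X : Polynomial K).Splits := by
    rw [Polynomial.splits_iff_card_roots, FiniteField.roots_X_pow_card_sub_X,
      FiniteField.X_pow_card_sub_X_natDegree_eq K Fintype.one_lt_card]
    rfl
  refine hsplits.mem_range_of_isRoot (FiniteField.X_pow_card_sub_X_ne_zero K Fintype.one_lt_card) ?_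
  simp [hx]

namespace MvPolynomial

variable {σ R : Type*}

theorem degreeOf_map_of_injective [CommSemiring R] {S : Type*} [CommSemiring S] {f : R →+* S}
    (hf : Function.Injective f) (i : σ) (p : MvPolynomial σ R) :
    (map f p).degreeOf i = p.degreeOf i := by
  classical
  rw [degreeOf_def, degreeOf_def, degrees_map_of_injective _ hf]

theorem totalDegree_ne_zero_of_irreducible_map [CommSemiring R] {S : Type*} [Field S]
    {f : R →+* S} {g : MvPolynomial σ R} (hg : Irreducible (map f g)) : g.totalDegree ≠ 0 := by
  intro h
  rw [totalDegree_eq_zero_iff_eq_C.mp h, map_C] at hg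
  rcases eq_or_ne (f (g.coeff 0)) 0 with h0 | h0
  · rw [h0, C_0] at hg
    exact not_irreducible_zero hg
  · exact hg.not_isUnit (h0.isUnit.map C)

section Domain

variable [CommRing R] [IsDomain R] {i : σ}

theorem degreeOf_le_of_dvd {p q : MvPolynomial σ R} (h : p ∣ q) (hq : q ≠ 0) :
    p.degreeOf i ≤ q.degreeOf i := by
  obtain ⟨r, rfl⟩ := h
  rw [degreeOf_mul_eq (left_ne_zero_of_mul hq) (right_ne_zero_of_mul hq)]
  exact Nat.le_add_right _ _

theorem degreeOf_rename_castSucc_add_mul_X_last {n : ℕ} (q : MvPolynomial (Fin n) R)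
    {p : MvPolynomial (Fin n) R} (hp : p ≠ 0) :
    (rename Fin.castSucc q + rename Fin.castSucc p * X (Fin.last n)).degreeOf (Fin.last n) = 1 := by
  have h0 (r : MvPolynomial (Fin n) R) : (rename Fin.castSucc r).degreeOf (Fin.last n) = 0 := by
    by_contra h
    obtain ⟨k, -, hk⟩ := mem_vars_rename _ _ (mem_vars_iff_degreeOf_ne_zero.mpr h)
    exact Fin.castSucc_ne_last k hk
  have hp' : rename Fin.castSucc p ≠ 0 :=
    (map_ne_zero_iff _ (rename_injective _ (Fin.castSucc_injective n))).mpr hp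
  have hlin : (rename Fin.castSucc p * X (Fin.last n)).degreeOf (Fin.last n) = 1 := by
    rw [degreeOf_mul_eq hp' (X_ne_zero _), h0, degreeOf_X_self]
  rw [add_comm (rename _ q), degreeOf_add_eq_of_degreeOf_lt (by rw [h0, hlin]; exact one_pos), hlin]

theorem exists_irreducible_dvd_of_degreeOf_eq_one [WfDvdMonoid (MvPolynomial σ R)]
    {f : MvPolynomial σ R} (hf : f.degreeOf i = 1) :
    ∃ g, Irreducible g ∧ g ∣ f ∧ g.degreeOf i = 1 := by
  induction f using WfDvdMonoid.induction_on_irreducible with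
  | zero => simp at hf
  | unit u hu =>
    obtain ⟨r, -, rfl⟩ := isUnit_iff_eq_C_of_isReduced.mp hu
    simp at hf
  | mul a p ha hp ih =>
    rw [degreeOf_mul_eq hp.ne_zero ha] at hf
    rcases Nat.add_eq_one_iff.mp hf with ⟨-, ha1⟩ | ⟨hp1, -⟩
    · obtain ⟨g, hg, hga, hg1⟩ := ih ha1
      exact ⟨g, hg, hga.mul_left p, hg1⟩
    · exact ⟨p, hp, dvd_mul_right p a, hp1⟩

theorem associated_of_dvd_of_degreeOf_eq_one [UniqueFactorizationMonoid (MvPolynomial σ R)]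
    {f g h : MvPolynomial σ R} (hf : f.degreeOf i = 1)
    (hg : Irreducible g) (hgf : g ∣ f) (hg1 : g.degreeOf i = 1)
    (hh : Irreducible h) (hhf : h ∣ f) (hh1 : h.degreeOf i = 1) :
    Associated h g := by
  have hf0 : f ≠ 0 := by
    rintro rfl
    simp at hf
  obtain ⟨w, rfl⟩ := hgf
  have hw : w.degreeOf i = 0 := by
    rw [degreeOf_mul_eq hg.ne_zero (right_ne_zero_of_mul hf0), hg1] at hf
    omega
  have hhw : ¬ h ∣ w := fun hdvd => by
    have := degreeOf_le_of_dvd (i := i) hdvd (right_ne_zero_of_mul hf0)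
    omega
  exact hh.associated_of_dvd hg ((hh.prime.dvd_or_dvd hhf).resolve_right hhw)

end Domain

section Field

variable {K : Type*} [Field K] {i : σ}

theorem eq_of_associated_of_coeff_eq {p q : MvPolynomial σ K} (h : Associated p q)
    {m : σ →₀ ℕ} (hm : p.coeff m = q.coeff m) (hm0 : p.coeff m ≠ 0) : p = q := by
  obtain ⟨u, rfl⟩ := h
  obtain ⟨r, -, hr⟩ := isUnit_iff_eq_C_of_isReduced.mp u.isUnit
  rw [hr, mul_comm, coeff_C_mul] at hm
  rw [hr, (mul_eq_right₀ hm0).mp hm.symm, C_1, mul_one]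

theorem exists_irreducible_dvd_map_eq_self (φ : K ≃+* K) {f : MvPolynomial σ K}
    (hf : f.degreeOf i = 1) (hφf : map (φ : K →+* K) f = f) :
    ∃ g, Irreducible g ∧ g ∣ f ∧ map (φ : K →+* K) g = g := by
  obtain ⟨h, hh, hhf, hh1⟩ := exists_irreducible_dvd_of_degreeOf_eq_one hf
  obtain ⟨m, hm⟩ := support_nonempty.mpr hh.ne_zero
  have hc : IsUnit (C (h.coeff m)⁻¹ : MvPolynomial σ K) :=
    (inv_ne_zero (mem_support_iff.mp hm)).isUnit.map C
  -- normalizing a coefficient to `1` singles out `g` in its class of associates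
  set g := C (h.coeff m)⁻¹ * h
  have hg : Irreducible g := (irreducible_isUnit_mul hc).mpr hh
  have hgf : g ∣ f := hc.mul_left_dvd.mpr hhf
  have hg1 : g.degreeOf i = 1 := by
    rw [degreeOf_mul_eq hc.ne_zero hh.ne_zero, degreeOf_C, hh1, zero_add]
  have hgm : g.coeff m = 1 := by
    rw [coeff_C_mul, inv_mul_cancel₀ (mem_support_iff.mp hm)]
  have hφg : Associated (map (φ : K →+* K) g) g := by
    refine associated_of_dvd_of_degreeOf_eq_one hf hg hgf hg1
      ((MulEquiv.irreducible_iff (mapEquiv σ φ)).mpr hg) (hφf ▸ map_dvd _ hgf) ?_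
    rw [degreeOf_map_of_injective φ.injective, hg1]
  refine ⟨g, hg, hgf, eq_of_associated_of_coeff_eq hφg (m := m) ?_ ?_⟩ <;>
    rw [coeff_map, hgm, map_one]
  exact one_ne_zero

theorem mem_range_map_of_map_frobenius_eq [Fintype K] {L : Type*} [Field L] [Algebra K L]
    {p : MvPolynomial σ L} (hp : map (FiniteField.frobeniusAlgHom K L : L →+* L) p = p) :
    p ∈ Set.range (map (algebraMap K L) : MvPolynomial σ K → _) := by
  rw [mem_range_map_iff_coeffs_subset]
  intro c hc
  obtain ⟨m, -, rfl⟩ := mem_coeffs_iff.mp hc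
  have hm := congrArg (coeff m) hp
  rw [coeff_map] at hm
  exact FiniteField.mem_range_algebraMap_of_pow_card_eq hm

theorem exists_dvd_irreducible_map_algebraicClosure [Fintype K] {f : MvPolynomial σ K}
    (hf : f.degreeOf i = 1) :
    ∃ g, g ∣ f ∧ Irreducible (map (algebraMap K (AlgebraicClosure K)) g) := by
  set L := AlgebraicClosure K
  set φ : L ≃+* L := (FiniteField.frobeniusAlgEquivOfAlgebraic K L).toRingEquiv
  have hφ (q : MvPolynomial σ K) :
      map (φ : L →+* L) (map (algebraMap K L) q) = map (algebraMap K L) q := by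
    rw [map_map]
    exact congrArg (map · q) (FiniteField.frobeniusAlgEquivOfAlgebraic K L).toAlgHom.comp_algebraMap
  obtain ⟨g, hg, ⟨w, hw⟩, hφg⟩ := exists_irreducible_dvd_map_eq_self φ
    (by rwa [degreeOf_map_of_injective (algebraMap K L).injective]) (hφ f)
  have hφw : map (φ : L →+* L) w = w := by
    have h := congrArg (map (φ : L →+* L)) hw
    rw [hφ, map_mul, hφg, hw] at h
    exact (mul_left_cancel₀ hg.ne_zero h).symm
  obtain ⟨g₀, rfl⟩ := mem_range_map_of_map_frobenius_eq (K := K) hφg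
  obtain ⟨w₀, rfl⟩ := mem_range_map_of_map_frobenius_eq (K := K) hφw
  refine ⟨g₀, ⟨w₀, map_injective _ (algebraMap K L).injective ?_⟩, hg⟩
  rw [hw, map_mul]

end Field

section Shear

variable [DecidableEq σ] {i j : σ}

noncomputable def shear (R : Type*) [CommRing R] (hij : i ≠ j) :
    MvPolynomial σ R ≃ₐ[R] MvPolynomial σ R :=
  AlgEquiv.ofAlgHom (aeval (Function.update X i (X i + X j)))
    (aeval (Function.update X i (X i - X j)))
    (algHom_ext fun k => by
      rcases eq_or_ne k i with rfl | hk <;> simp [Function.update_of_ne, hij.symm, *])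
    (algHom_ext fun k => by
      rcases eq_or_ne k i with rfl | hk <;> simp [Function.update_of_ne, hij.symm, *])

theorem shear_apply [CommRing R] (hij : i ≠ j) (p : MvPolynomial σ R) :
    shear R hij p = aeval (Function.update X i (X i + X j)) p := rfl

theorem map_shear [CommRing R] {S : Type*} [CommRing S] (f : R →+* S) (hij : i ≠ j)
    (p : MvPolynomial σ R) : map f (shear R hij p) = shear S hij (map f p) := by
  induction p using MvPolynomial.induction_on with
  | C r => simp [shear_apply]
  | add p q hp hq => simp only [map_add, hp, hq]
  | mul_X p k hp =>
    simp only [map_mul, hp, map_X]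
    congr 1
    rcases eq_or_ne k i with rfl | hk <;> simp [shear_apply, Function.update_of_ne, *]

theorem map_shear_symm [CommRing R] {S : Type*} [CommRing S] (f : R →+* S) (hij : i ≠ j)
    (p : MvPolynomial σ R) : map f ((shear R hij).symm p) = (shear S hij).symm (map f p) := by
  apply (shear S hij).injective
  rw [AlgEquiv.apply_symm_apply, ← map_shear, AlgEquiv.apply_symm_apply]

end Shear

end MvPolynomial

theorem hasAbsIrredComp_of_degreeOf_shear_eq_one {F : Type} [Field F] [Fintype F]
    {P : MvPolynomial (Fin 5) F} {i j k : Fin 5} (hij : i ≠ j)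
    (h : (shear F hij P).degreeOf k = 1) : HasAbsIrredComp P := by
  obtain ⟨g, hg, hirr⟩ := exists_dvd_irreducible_map_algebraicClosure h
  have hirr' : Irreducible (map (algebraMap F (AlgebraicClosure F)) ((shear F hij).symm g)) := by
    rw [map_shear_symm]
    exact (MulEquiv.irreducible_iff _).mpr hirr
  refine ⟨(shear F hij).symm g, ?_, totalDegree_ne_zero_of_irreducible_map hirr', hirr'⟩
  simpa using map_dvd (shear F hij).symm hg

section SpolySpec

variable {K : Type} [Field K]

noncomputable def spolyLinCoeff (b : ℕ → ℕ → K) (d : ℕ) : MvPolynomial (Fin 4) K :=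
  (X 3 - X 1) * ∑ i ∈ range (d + 1), C (b i 1) * (X 3 ^ i - X 1 ^ i) * X 0 ^ (d - i - 1)

noncomputable def spolyConstCoeff (a : ℕ → K) (b : ℕ → ℕ → K) (d : ℕ) :
    MvPolynomial (Fin 4) K :=
  X 2 ^ 2 * X 0 ^ (d - 1)
  - X 2 * ∑ i ∈ range (d + 1), C (a i) * (X 3 ^ i - X 1 ^ i) * X 0 ^ (d - i)
  - (X 1 - X 3) * ∑ i ∈ range (d + 1),
      (C (b i 0) * (X 3 ^ i - X 1 ^ i) * X 0 ^ (d - i)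
        - C (b i 1) * X 1 ^ i * X 2 * X 0 ^ (d - i - 1))

theorem shear_spolySpec (a : ℕ → K) (b : ℕ → ℕ → K) {d : ℕ} (hd : 1 ≤ d)
    (hb : ∀ i j, 2 ≤ j → b i j = 0) :
    shear K (by decide : (2 : Fin 5) ≠ 4) (SpolySpec a b d) =
      rename Fin.castSucc (spolyConstCoeff a b d)
        + rename Fin.castSucc (spolyLinCoeff b d) * X 4 := by
  have hj (i : ℕ) : ∑ j ∈ range (d + 1),
      (C (b i j) * (X 3 ^ i * X 4 ^ j - X 1 ^ i * X 2 ^ j) * X 0 ^ (d - i - j) :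
        MvPolynomial (Fin 5) K) =
      C (b i 0) * (X 3 ^ i - X 1 ^ i) * X 0 ^ (d - i)
        + C (b i 1) * (X 3 ^ i * X 4 - X 1 ^ i * X 2) * X 0 ^ (d - i - 1) := by
    rw [← sum_subset (range_subset_range.mpr (by omega : 2 ≤ d + 1)) fun j _ hj => by
      rw [hb i j (not_lt.mp (mt mem_range.mpr hj)), C_0, zero_mul, zero_mul]]
    simp [sum_range_succ]
  have hX4 (i : ℕ) : (C (b i 1) * (X 3 ^ i * X 4 - X 1 ^ i * (X 2 + X 4)) * X 0 ^ (d - i - 1) :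
      MvPolynomial (Fin 5) K) = X 4 * (C (b i 1) * (X 3 ^ i - X 1 ^ i) * X 0 ^ (d - i - 1))
        - C (b i 1) * X 1 ^ i * X 2 * X 0 ^ (d - i - 1) := by
    ring
  simp only [SpolySpec, spolyConstCoeff, spolyLinCoeff, hj, shear_apply, Fin.isValue,
    aeval_eq_bind₁, map_sub, map_mul, map_pow, bind₁_X_right, Function.update_self,
    ne_eq, Fin.reduceEq, not_false_eq_true, Function.update_of_ne,
    add_sub_cancel_right, map_sum, algHom_C, algebraMap_eq, map_add, Nat.reduceAdd,
    sum_sub_distrib, rename_X, Fin.reduceCastSucc, Fin.castSucc_zero, Fin.castSucc_one]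
  simp only [hX4, sum_add_distrib, sum_sub_distrib, ← mul_sum]
  ring

theorem spolyLinCoeff_ne_zero {b : ℕ → ℕ → K} {d i₀ : ℕ} (hb01 : b 0 1 = 0)
    (hi₀ : b i₀ 1 ≠ 0) (hd : i₀ ≤ d) : spolyLinCoeff b d ≠ 0 := by
  have hi₀0 : i₀ ≠ 0 := by
    rintro rfl
    exact hi₀ hb01
  intro h
  -- at `X₀ = X₁ = 1, X₃ = t` it becomes `(t - 1) ∑ bᵢ₁ (tⁱ - 1)`, with `t^i₀`-coefficient `bᵢ₀₁`
  have h0 := congrArg (aeval (![1, 1, 0, Polynomial.X] : Fin 4 → Polynomial K)) h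
  simp only [spolyLinCoeff, map_mul, map_sub, map_sum, map_pow, aeval_X, aeval_C, map_zero,
    Matrix.cons_val, one_pow, mul_one, Polynomial.algebraMap_eq, mul_eq_zero] at h0
  refine h0.elim (Polynomial.X_sub_C_ne_zero 1) fun h1 => hi₀ ?_
  have := congrArg (Polynomial.coeff · i₀) h1
  simpa [Polynomial.coeff_one, hi₀0, hd, Nat.lt_succ_iff] using this

end SpolySpec

theorem stmt_12_general
    (F : Type) [Field F] [Fintype F]
    (a : ℕ → F) (b : ℕ → ℕ → F)
    (hb01 : b 0 1 = 0)
    (d1 d2 d : ℕ)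
    (hd2ub : ∀ i j, b i j ≠ 0 → i + j ≤ d2)
    (hd : d = max d1 d2)
    (j2 : ℕ)
    (hj2ex : ∃ i, b i j2 ≠ 0) (hj2ub : ∀ i j, b i j ≠ 0 → j ≤ j2)
    (hj2v : j2 = 1) :
    HasAbsIrredComp (SpolySpec a b d) := by
  subst hj2v
  obtain ⟨i₀, hi₀⟩ := hj2ex
  have hi₀d : i₀ + 1 ≤ d := (hd2ub i₀ 1 hi₀).trans (hd ▸ le_max_right d1 d2)
  have hb : ∀ i j, 2 ≤ j → b i j = 0 := fun i j hj => by
    by_contra h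
    have := hj2ub i j h
    omega
  refine hasAbsIrredComp_of_degreeOf_shear_eq_one (k := Fin.last 4) (by decide : (2 : Fin 5) ≠ 4) ?_
  rw [shear_spolySpec a b (by omega) hb]
  exact degreeOf_rename_castSucc_add_mul_X_last _ (spolyLinCoeff_ne_zero hb01 hi₀ (by omega))

theorem stmt_12
    (p ℓ : ℕ) (hp : p.Prime) (hℓ : 0 < ℓ)
    (F : Type) [Field F] [Fintype F] [CharP F p]
    (hcard : Fintype.card F = p ^ ℓ)
    (a : ℕ → F) (b : ℕ → ℕ → F)
    (ha0 : a 0 = 0) (hb00 : b 0 0 = 0) (hb01 : b 0 1 = 0)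
    (d1 d2 d : ℕ)
    (hd1pos : 1 ≤ d1)
    (hd1ub : ∀ i, a i ≠ 0 → i ≤ d1)
    (hd1max : d1 ≠ 1 → a d1 ≠ 0)
    (hd2ub : ∀ i j, b i j ≠ 0 → i + j ≤ d2)
    (hd2max : ∃ i j, i + j = d2 ∧ b i j ≠ 0)
    (hd : d = max d1 d2)
    (j2 : ℕ)
    (hj2ex : ∃ i, b i j2 ≠ 0) (hj2ub : ∀ i j, b i j ≠ 0 → j ≤ j2)
    (hp2 : 2 < p) (hdd : d1 < d2) (hj2v : j2 = 1) :
    HasAbsIrredComp (SpolySpec a b d) :=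
  stmt_12_general F a b hb01 d1 d2 d hd2ub hd j2 hj2ex hj2ub hj2v
end

section
/- Let K be an algebraically closed field of characteristic p > 3, let a, b ∈ K with a ≠ 0 and b ≠ 0, and let d1 > 6 be an integer. Then the polynomial L(X) = (a² − 4b)·X^{2d1} + 4b·X^{2d1−1} − 2a²·X^{d1} + 4b·X + (a² − 4b) is not the square of a polynomial in K[X]. -/
open Polynomial Finset

def Bs : ℕ → ℤ
  | 0 => 1
  | (k+1) => -2 * catalan k

@[simp] lemma Bs_zero : Bs 0 = 1 := rfl
lemma Bs_succ (k : ℕ) : Bs (k+1) = -2 * catalan k := rfl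

lemma catalan_rec (m : ℕ) : (m+2) * catalan (m+1) = (4*m+2) * catalan m := by
  have h1 := succ_mul_catalan_eq_centralBinom (m+1)
  have h2 := succ_mul_catalan_eq_centralBinom m
  have h3 := Nat.succ_mul_centralBinom_succ m
  have : (m+1) * ((m+2) * catalan (m+1)) = (m+1) * ((4*m+2) * catalan m) := by
    calc (m+1) * ((m+2) * catalan (m+1)) = (m+1) * ((m+1+1) * catalan (m+1)) := by ring_nf
    _ = (m+1) * Nat.centralBinom (m+1) := by rw [h1]
    _ = 2 * (2*m+1) * Nat.centralBinom m := h3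
    _ = 2 * (2*m+1) * ((m+1) * catalan m) := by rw [h2]
    _ = (m+1) * ((4*m+2) * catalan m) := by ring
  exact Nat.eq_of_mul_eq_mul_left (by omega) this

lemma Bs_rec (k : ℕ) : ((k:ℤ)+1) * Bs (k+1) = (4*(k:ℤ)-2) * Bs k := by
  cases k with
  | zero => simp [Bs_succ, catalan_zero]
  | succ m =>
    have := catalan_rec m
    have hz : ((m:ℤ)+2) * catalan (m+1) = (4*(m:ℤ)+2) * catalan m := by
      exact_mod_cast congrArg (Nat.cast : ℕ → ℤ) this
    rw [Bs_succ, Bs_succ]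
    push_cast
    push_cast at hz
    linear_combination (-2 : ℤ) * hz

lemma Bs_conv' (m : ℕ) :
    ∑ i ∈ Finset.range (m+1), Bs (i+1) * Bs (m+1-i) = -2 * Bs (m+2) := by
  have h1 : ∀ i ∈ Finset.range (m+1), Bs (i+1) * Bs (m+1-i)
      = 4 * ((catalan i * catalan (m-i) : ℕ) : ℤ) := by
    intro i hi
    simp only [Finset.mem_range] at hi
    have : m + 1 - i = (m - i) + 1 := by omega
    rw [this, Bs_succ, Bs_succ]
    push_cast
    ring
  rw [Finset.sum_congr rfl h1, ← Finset.mul_sum, ← Nat.cast_sum]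
  have h2 : ∑ i ∈ Finset.range (m+1), catalan i * catalan (m-i) = catalan (m+1) := by
    rw [catalan_succ']
    rw [← Finset.Nat.sum_antidiagonal_eq_sum_range_succ (fun x y => catalan x * catalan y) m]
  rw [h2, Bs_succ]
  push_cast
  ring


lemma keylem {K : Type} [Field K] (h2 : (2:K) ≠ 0) (d : ℕ) (hd : 7 ≤ d)
    (P h : K[X]) (hP : h^2 = P) (e b : K) (he : P.coeff 0 = e) (hb : P.coeff 1 = 4*b)
    (he0 : e ≠ 0) (hz : ∀ k, 2 ≤ k → k ≤ d-1 → P.coeff k = 0) :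
    (h.coeff 0)^2 = e ∧ h.coeff 0 ≠ 0 ∧
      ∀ k, k ≤ d-1 → h.coeff k = h.coeff 0 * (Bs k : K) * (-(b/e))^k := by
  have hsq : ∀ k, P.coeff k = ∑ i ∈ Finset.range (k+1), h.coeff i * h.coeff (k-i) := by
    intro k
    rw [← hP, sq, coeff_mul, Finset.Nat.sum_antidiagonal_eq_sum_range_succ_mk]
  have h00 : (h.coeff 0)^2 = e := by
    have := hsq 0
    simp [Finset.sum_range_one] at this
    rw [← he, this]; ring
  have h0 : h.coeff 0 ≠ 0 := by
    intro hc
    rw [hc] at h00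
    exact he0 (by rw [← h00]; ring)
  refine ⟨h00, h0, ?_⟩
  have h1 : h.coeff 1 = h.coeff 0 * (Bs 1 : K) * (-(b/e))^1 := by
    have hs := hsq 1
    rw [hb] at hs
    rw [Finset.sum_range_succ, Finset.sum_range_one] at hs
    simp only [Nat.sub_self, Nat.sub_zero] at hs
    -- hs : 4*b = h0 * h1 + h1 * h0
    have hh1 : 2 * h.coeff 1 * e = 4 * h.coeff 0 * b := by
      linear_combination (-(h.coeff 0)) * hs - 2 * (h.coeff 1) * h00
    have hB1 : ((Bs 1 : ℤ) : K) = -2 := by rw [Bs_succ, catalan_zero]; push_cast; ring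
    rw [hB1, pow_one]
    field_simp
    rcases mul_eq_zero.mp (show (2:K) * (h.coeff 1 * e - h.coeff 0 * b * 2) = 0 by linear_combination hh1) with hx | hx
    · exact absurd hx h2
    · linear_combination hx

  intro k
  induction k using Nat.strong_induction_on with
  | _ k IH =>
    intro hk
    match k, hk with
    | 0, _ => simp [Bs]
    | 1, _ => exact h1
    | (m+2), hk => ?_
    have hc : (0:K) = ∑ i ∈ Finset.range (m+2+1), h.coeff i * h.coeff (m+2-i) := by
      rw [← hsq]; exact (hz (m+2) (by omega) hk).symm
    rw [Finset.sum_range_succ'] at hc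
    rw [Finset.sum_range_succ] at hc
    simp only [Nat.sub_self, Nat.sub_zero, Nat.add_sub_cancel] at hc
    -- now: 0 = (∑ i in range (m+1), h.coeff (i+1) * h.coeff (m+2-(i+1))) + h.coeff (m+2) * h.coeff 0 + h.coeff 0 * h.coeff (m+2)
    have hmid : ∀ i ∈ Finset.range (m+1),
        h.coeff (i+1) * h.coeff (m+2-(i+1))
          = (h.coeff 0 * h.coeff 0 * (-(b/e))^(m+2)) * ((Bs (i+1) * Bs (m+1-i) : ℤ) : K) := by
      intro i hi
      simp only [Finset.mem_range] at hi
      have e1 : m + 2 - (i+1) = m + 1 - i := by omega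
      have e2 : h.coeff (i+1) = h.coeff 0 * (Bs (i+1) : K) * (-(b/e))^(i+1) :=
        IH (i+1) (by omega) (by omega)
      have e3 : h.coeff (m+1-i) = h.coeff 0 * (Bs (m+1-i) : K) * (-(b/e))^(m+1-i) :=
        IH (m+1-i) (by omega) (by omega)
      rw [e1, e2, e3]
      have e5 : (-(b/e))^(i+1) * (-(b/e))^(m+1-i) = (-(b/e))^(m+2) := by
        rw [← pow_add]; congr 1; omega
      push_cast
      linear_combination (h.coeff 0 * h.coeff 0 * ((Bs (i+1):ℤ):K) * ((Bs (m+1-i):ℤ):K)) * e5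
    rw [Finset.sum_congr rfl hmid, ← Finset.mul_sum, ← Int.cast_sum, Bs_conv'] at hc
    -- hc : 0 = h0*h0*t^(m+2) * ((-2 * Bs (m+2) : ℤ):K) + h_{m+2}*h0 + h0*h_{m+2}
    have : 2 * h.coeff 0 * (h.coeff (m+2) - h.coeff 0 * (Bs (m+2):K) * (-(b/e))^(m+2)) = 0 := by
      push_cast at hc ⊢
      linear_combination -hc
    rcases mul_eq_zero.mp this with h' | h'
    · rcases mul_eq_zero.mp h' with h'' | h''
      · exact absurd h'' h2
      · exact absurd h'' h0
    · linear_combination h'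


theorem stmt_17
    (p : ℕ) (hp : p.Prime) (hp3 : 3 < p)
    (K : Type) [Field K] [IsAlgClosed K] [CharP K p]
    (a b : K) (ha : a ≠ 0) (hb : b ≠ 0)
    (d1 : ℕ) (hd1 : 6 < d1) :
    ¬ ∃ g : Polynomial K,
        C (a ^ 2 - 4 * b) * X ^ (2 * d1) + C (4 * b) * X ^ (2 * d1 - 1)
          - C (2 * a ^ 2) * X ^ d1 + C (4 * b) * X + C (a ^ 2 - 4 * b) = g ^ 2 := by
  rintro ⟨g, hg⟩
  set e : K := a ^ 2 - 4 * b with hedef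
  set L : K[X] := C (a ^ 2 - 4 * b) * X ^ (2 * d1) + C (4 * b) * X ^ (2 * d1 - 1)
          - C (2 * a ^ 2) * X ^ d1 + C (4 * b) * X + C (a ^ 2 - 4 * b) with hLdef
  -- characteristic facts
  have h2 : (2:K) ≠ 0 := by
    intro hx
    have hdvd := (CharP.cast_eq_zero_iff K p 2).mp (by exact_mod_cast hx)
    have := Nat.le_of_dvd (by norm_num) hdvd
    omega
  have cL : ∀ k, L.coeff k =
      (if k = 2*d1 then e else 0) + (if k = 2*d1-1 then 4*b else 0)
      + (if k = d1 then -(2*a^2) else 0) + (if k = 1 then 4*b else 0)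
      + (if k = 0 then e else 0) := by
    intro k
    simp only [hLdef, coeff_add, coeff_sub, coeff_C_mul, coeff_X_pow, coeff_C, coeff_X,
      mul_ite, mul_one, mul_zero]
    rw [hedef]
    split_ifs <;> first | ring1 | (exfalso; omega)
  -- basic coefficient facts
  have hL0 : L.coeff 0 = e := by
    rw [cL 0, if_neg (by omega), if_neg (by omega), if_neg (by omega), if_neg (by omega),
      if_pos rfl]; ring
  have hL1 : L.coeff 1 = 4*b := by
    rw [cL 1, if_neg (by omega), if_neg (by omega), if_neg (by omega), if_pos rfl,
      if_neg (by omega)]; ring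
  have hLz : ∀ k, 2 ≤ k → k ≤ d1 - 1 → L.coeff k = 0 := by
    intro k hk2 hk
    rw [cL k, if_neg (by omega), if_neg (by omega), if_neg (by omega), if_neg (by omega),
      if_neg (by omega)]; ring
  have hL2d : L.coeff (2*d1) = e := by
    rw [cL _, if_pos rfl, if_neg (by omega), if_neg (by omega), if_neg (by omega),
      if_neg (by omega)]; ring
  have hL2d1 : L.coeff (2*d1-1) = 4*b := by
    rw [cL _, if_neg (by omega), if_pos rfl, if_neg (by omega), if_neg (by omega),
      if_neg (by omega)]; ring
  have hgsq : g^2 = L := hg.symm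
  have hc0 : g.coeff 0 * g.coeff 0 = e := by
    rw [← Polynomial.mul_coeff_zero, ← sq, hgsq, hL0]
  have hc1 : g.coeff 0 * g.coeff 1 + g.coeff 1 * g.coeff 0 = 4*b := by
    have h1 : (g^2).coeff 1 = 4*b := by rw [hgsq, hL1]
    rw [sq, coeff_mul, Finset.Nat.sum_antidiagonal_eq_sum_range_succ_mk] at h1
    simpa [Finset.sum_range_succ] using h1
  have h4 : (4:K) ≠ 0 := by
    intro hx
    apply h2
    have : (2:K) * 2 = 0 := by linear_combination hx
    rcases mul_eq_zero.mp this with h | h <;> exact h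
  have hg0 : g.coeff 0 ≠ 0 := by
    intro h0
    rw [h0] at hc1
    have hb4 : (4:K)*b = 0 := by linear_combination -hc1
    rcases mul_eq_zero.mp hb4 with h | h
    · exact h4 h
    · exact hb h
  have he0 : e ≠ 0 := by
    intro h
    rw [h] at hc0
    exact hg0 (mul_self_eq_zero.mp hc0)
  obtain ⟨hA0, hA0ne, hA⟩ := keylem h2 d1 hd1 L g hgsq e b hL0 hL1 he0 hLz
  -- degrees
  have hndL_le : L.natDegree ≤ 2*d1 := by
    apply Polynomial.natDegree_le_iff_coeff_eq_zero.mpr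
    intro N hN
    rw [cL N, if_neg (by omega), if_neg (by omega), if_neg (by omega), if_neg (by omega),
      if_neg (by omega)]; ring
  have hndL : L.natDegree = 2*d1 :=
    le_antisymm hndL_le (le_natDegree_of_ne_zero (by rw [hL2d]; exact he0))
  have hndg : g.natDegree = d1 := by
    have hnd : (g^2).natDegree = 2 * g.natDegree := by
      rw [Polynomial.natDegree_pow]
    rw [hgsq, hndL] at hnd
    omega
  -- reverse
  have hrevsq : (g.reverse)^2 = L.reverse := by
    rw [hg, sq, sq, Polynomial.reverse_mul_of_domain]
  have hrevcoeff : ∀ k, k ≤ 2*d1 → L.reverse.coeff k = L.coeff (2*d1 - k) := by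
    intro k hk
    rw [Polynomial.coeff_reverse, hndL, Polynomial.revAt_le hk]
  have hgrevcoeff : ∀ k, k ≤ d1 → g.reverse.coeff k = g.coeff (d1 - k) := by
    intro k hk
    rw [Polynomial.coeff_reverse, hndg, Polynomial.revAt_le hk]
  have hR0 : L.reverse.coeff 0 = e := by
    rw [hrevcoeff 0 (by omega), Nat.sub_zero, hL2d]
  have hR1 : L.reverse.coeff 1 = 4*b := by
    rw [hrevcoeff 1 (by omega), hL2d1]
  have hRz : ∀ k, 2 ≤ k → k ≤ d1 - 1 → L.reverse.coeff k = 0 := by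
    intro k hk2 hk
    rw [hrevcoeff k (by omega), cL _, if_neg (by omega), if_neg (by omega), if_neg (by omega),
      if_neg (by omega), if_neg (by omega)]; ring
  obtain ⟨hB0, hB0ne, hB⟩ := keylem h2 d1 hd1 L.reverse g.reverse hrevsq e b hR0 hR1 he0 hRz
  set t : K := -(b/e) with htdef
  have ht0 : t ≠ 0 := by
    rw [htdef]
    intro h
    rw [neg_eq_zero, _root_.div_eq_zero_iff] at h
    rcases h with h | h
    · exact hb h
    · exact he0 h
  set gd : K := g.reverse.coeff 0 with hgddef
  have hTop : ∀ i, 1 ≤ i → i ≤ 4 → g.coeff i = gd * ((Bs (d1-i) : ℤ) : K) * t^(d1-i) := by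
    intro i h1 h4'
    have hkey := hB (d1-i) (by omega)
    rw [hgrevcoeff (d1-i) (by omega), show d1 - (d1 - i) = i from by omega] at hkey
    exact hkey
  -- step relations
  have hstep : ∀ i, 1 ≤ i → i ≤ 3 →
      ((d1:K) - i) * g.coeff i = (4*(d1:K) - (4*i+6)) * t * g.coeff (i+1) := by
    intro i h1 h3
    have e1 := hTop i h1 (by omega)
    have e2 := hTop (i+1) (by omega) (by omega)
    have hrK := congrArg (fun z : ℤ => (z : K)) (Bs_rec (d1 - i - 1))
    push_cast at hrK
    rw [show d1 - i - 1 + 1 = d1 - i from by omega] at hrK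
    have hcst : ((d1 - i - 1 : ℕ) : K) = (d1:K) - (i:K) - 1 := by
      rw [show d1 - i - 1 = d1 - (i+1) from by omega, Nat.cast_sub (by omega : i+1 ≤ d1)]
      push_cast; ring
    rw [hcst] at hrK
    rw [show d1 - (i+1) = d1 - i - 1 from by omega] at e2
    have hpow : t^(d1-i) = t^(d1-i-1) * t := by
      rw [← pow_succ]; congr 1; omega
    calc ((d1:K) - i) * g.coeff i
        = ((d1:K) - i) * (gd * ((Bs (d1-i) : ℤ) : K) * t^(d1-i)) := by rw [e1]
      _ = (gd * t^(d1-i-1) * t) * ((((d1:K) - i - 1) + 1) * ((Bs (d1-i) : ℤ) : K)) := by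
          rw [hpow]; ring
      _ = (gd * t^(d1-i-1) * t) * ((4*((d1:K) - i - 1) - 2) * ((Bs (d1-i-1) : ℤ) : K)) := by
          rw [hrK]
      _ = (4*(d1:K) - (4*i+6)) * t * (gd * ((Bs (d1-i-1) : ℤ) : K) * t^(d1-i-1)) := by ring
      _ = (4*(d1:K) - (4*i+6)) * t * g.coeff (i+1) := by rw [← e2]
  -- explicit Bs values
  have hBs1 : ((Bs 1 : ℤ) : K) = -2 := by rw [Bs_succ, catalan_zero]; push_cast; ring
  have hBs2 : ((Bs 2 : ℤ) : K) = -2 := by rw [Bs_succ, catalan_one]; push_cast; ring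
  have hBs3 : ((Bs 3 : ℤ) : K) = -4 := by rw [Bs_succ, catalan_two]; push_cast; ring
  have hBs4 : ((Bs 4 : ℤ) : K) = -10 := by rw [Bs_succ, catalan_three]; push_cast; ring
  set g0 : K := g.coeff 0 with hg0def
  have hA1 := hA 1 (by omega)
  have hA2 := hA 2 (by omega)
  have hA3 := hA 3 (by omega)
  have hA4 := hA 4 (by omega)
  rw [hBs1] at hA1
  rw [hBs2] at hA2
  rw [hBs3] at hA3
  rw [hBs4] at hA4
  have hs1 := hstep 1 (by omega) (by omega)
  have hs2 := hstep 2 (by omega) (by omega)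
  have hs3 := hstep 3 (by omega) (by omega)
  rw [hA1, hA2] at hs1
  rw [hA2, hA3] at hs2
  rw [hA3, hA4] at hs3
  push_cast at hs1 hs2 hs3
  have hE1 : (d1:K) - 1 = (4*(d1:K) - 10) * t^2 :=
    mul_left_cancel₀ (by
      exact mul_ne_zero (mul_ne_zero (by intro h; exact h2 (by linear_combination -h)) hg0) ht0
      : (-2) * g0 * t ≠ 0) (by linear_combination hs1)
  have hE2 : (d1:K) - 2 = (8*(d1:K) - 28) * t^2 :=
    mul_left_cancel₀ (by
      exact mul_ne_zero (mul_ne_zero (by intro h; exact h2 (by linear_combination -h)) hg0)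
        (pow_ne_zero 2 ht0)
      : (-2) * g0 * t^2 ≠ 0) (by linear_combination hs2)
  have hE3 : 2*((d1:K) - 3) = (20*(d1:K) - 90) * t^2 :=
    mul_left_cancel₀ (by
      exact mul_ne_zero (mul_ne_zero (by intro h; exact h2 (by linear_combination -h)) hg0)
        (pow_ne_zero 3 ht0)
      : (-2) * g0 * t^3 ≠ 0) (by linear_combination hs3)
  have hfinal : 8*(d1:K) - 4 = 0 := by
    linear_combination (8*(d1:K)-28)*hE1 - (24*(d1:K)-100)*hE2 + (8*(d1:K)-28)*hE3
  -- conclude p ∣ 2*d1 - 1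
  have hpdvd : p ∣ 2*d1 - 1 := by
    have hcz : ((4*(2*d1-1) : ℕ) : K) = 0 := by
      push_cast [Nat.cast_sub (by omega : 1 ≤ 2*d1)]
      linear_combination hfinal
    have hd4 := (CharP.cast_eq_zero_iff K p _).mp hcz
    rcases (Nat.Prime.dvd_mul hp).mp hd4 with hx | hx
    · exfalso
      have := Nat.le_of_dvd (by norm_num) hx
      have hp4 : p = 4 := by omega
      rw [hp4] at hp
      norm_num at hp
    · exact hx
  have h2d1cast : ((2*d1 - 1 : ℕ) : K) = 0 := (CharP.cast_eq_zero_iff K p _).mpr hpdvd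
  have hdelta : 2*(d1:K) = 1 := by
    have := h2d1cast
    rw [Nat.cast_sub (by omega : 1 ≤ 2*d1)] at this
    push_cast at this
    linear_combination this
  -- the derivative
  have c1 : ((2*d1 : ℕ) : K) = 1 := by push_cast; linear_combination hdelta
  have hder : derivative L = C (a^2-4*b) * X^(2*d1-1) - C (a^2) * X^(d1-1) + C (4*b) := by
    rw [hLdef]
    simp only [derivative_add, derivative_sub, derivative_mul, derivative_C, derivative_X_pow,
      derivative_X, zero_mul, zero_add, mul_one]
    rw [c1, h2d1cast]
    have c3 : (C (2*a^2) * C ((d1:ℕ) : K) : K[X]) = C (a^2) := by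
      rw [← C_mul]
      congr 1
      linear_combination a^2 * hdelta
    simp only [C_1, C_0, mul_one, mul_zero, zero_mul, add_zero, zero_add, one_mul]
    linear_combination (-(X^(d1-1)) : K[X]) * c3
  -- switch to m-language for exponent arithmetic
  obtain ⟨m, hm⟩ : ∃ m, d1 = m + 1 := ⟨d1-1, by omega⟩
  subst hm
  have hm6 : 6 ≤ m := by omega
  -- the trinomial Q
  set Q : K[X] := C (a^2-4*b) * (L - X * derivative L) - C (4*b) * derivative L with hQdef
  have hQform : Q = C (-(a^2*(a^2-4*b))) * X^(m+1) + C (4*a^2*b) * X^m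
      + C ((a^2-4*b)^2 - 16*b^2) := by
    rw [hQdef, hder, hLdef]
    rw [show 2*(m+1)-1 = m+(m+1) from by omega, show 2*(m+1) = (m+1)+(m+1) from by omega,
      show m+1-1 = m from by omega]
    simp only [map_neg, map_sub, map_add, map_mul, map_pow, map_ofNat]
    ring
  have hdvdL : g ∣ L := ⟨g, by rw [hg, sq]⟩
  have hdvdD : g ∣ derivative L := by
    rw [hg, derivative_pow]
    apply dvd_mul_of_dvd_left
    apply dvd_mul_of_dvd_right
    simpa using dvd_pow_self g (n := 2-1) (by norm_num)
  have hdvdQ : g ∣ Q := by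
    rw [hQdef]
    exact dvd_sub (Dvd.dvd.mul_left (dvd_sub hdvdL (Dvd.dvd.mul_left hdvdD X)) _)
      (Dvd.dvd.mul_left hdvdD _)
  have haene : -(a^2*(a^2-4*b)) ≠ 0 := by
    intro h'
    have h'' : a^2*(a^2-4*b) = 0 := by linear_combination -h'
    rcases mul_eq_zero.mp h'' with h3 | h3
    · exact ha (pow_eq_zero_iff (by norm_num) |>.mp h3)
    · exact he0 (by rw [hedef]; exact h3)
  have hQd1 : Q.coeff (m+1) = -(a^2*(a^2-4*b)) := by
    rw [hQform]
    simp only [coeff_add, coeff_C_mul, coeff_X_pow, coeff_C]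
    rw [if_neg (show ¬(m+1 = m) from by omega), if_neg (show ¬(m+1 = 0) from by omega)]
    simp
  have hQne : Q ≠ 0 := by
    intro h
    rw [h, coeff_zero] at hQd1
    exact haene hQd1.symm
  have hndQ : Q.natDegree = m+1 := by
    apply le_antisymm
    · rw [hQform]
      apply le_trans (natDegree_add_le _ _)
      apply max_le
      · apply le_trans (natDegree_add_le _ _)
        apply max_le
        · exact le_trans (natDegree_C_mul_le _ _) (natDegree_X_pow_le _)
        · exact le_trans (le_trans (natDegree_C_mul_le _ _) (natDegree_X_pow_le _)) (by omega)
      · exact le_trans (Nat.le_of_eq (natDegree_C _)) (Nat.zero_le _)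
    · exact le_natDegree_of_ne_zero (by rw [hQd1]; exact haene)
  obtain ⟨w, hw⟩ := hdvdQ
  have hwne : w ≠ 0 := by
    intro h
    rw [h, mul_zero] at hw
    exact hQne hw
  have hgne : g ≠ 0 := by
    intro h
    rw [h, zero_mul] at hw
    exact hQne hw
  have hndw : w.natDegree = 0 := by
    have := Polynomial.natDegree_mul hgne hwne
    rw [← hw, hndQ, hndg] at this
    omega
  have hwC : w = C (w.coeff 0) := Polynomial.eq_C_of_natDegree_eq_zero hndw
  set c : K := w.coeff 0 with hcdef
  have hQ2 : Q^2 = C (c^2) * L := by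
    calc Q^2 = (g*w)^2 := by rw [hw]
      _ = g^2 * (C c)^2 := by rw [← hwC]; ring
      _ = C (c^2) * L := by rw [← hgsq, ← C_pow]; ring
  have hcoefQ2 : (Q^2).coeff (2*m) = (4*a^2*b)^2 := by
    have hexp : Q^2 = C ((a^2*(a^2-4*b))^2) * X^(2*m+2)
        + C (-(2*(a^2*(a^2-4*b))*(4*a^2*b))) * X^(2*m+1)
        + C ((4*a^2*b)^2) * X^(2*m)
        + C (-(2*(a^2*(a^2-4*b))*((a^2-4*b)^2-16*b^2))) * X^(m+1)
        + C (2*(4*a^2*b)*((a^2-4*b)^2-16*b^2)) * X^m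
        + C (((a^2-4*b)^2-16*b^2)^2) := by
      rw [hQform]
      rw [show 2*m+2 = (m+1)+(m+1) from by omega, show 2*m+1 = m+(m+1) from by omega,
        show 2*m = m+m from by omega]
      simp only [map_neg, map_sub, map_add, map_mul, map_pow, map_ofNat]
      ring
    rw [hexp]
    simp only [coeff_add, coeff_C_mul, coeff_X_pow, coeff_C]
    rw [if_neg (show ¬(2*m = 2*m+2) from by omega), if_neg (show ¬(2*m = 2*m+1) from by omega),
      if_neg (show ¬(2*m = m+1) from by omega), if_neg (show ¬(2*m = m) from by omega),
      if_neg (show ¬(2*m = 0) from by omega)]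
    simp
  have hzero : (4*a^2*b)^2 = 0 := by
    rw [← hcoefQ2, hQ2, coeff_C_mul, cL _, if_neg (by omega), if_neg (by omega),
      if_neg (by omega), if_neg (by omega), if_neg (by omega)]
    ring
  have hfz : 4*a^2*b = 0 := pow_eq_zero_iff (by norm_num) |>.mp hzero
  rcases mul_eq_zero.mp hfz with h' | h'
  · rcases mul_eq_zero.mp h' with h'' | h''
    · exact h4 h''
    · exact ha (pow_eq_zero_iff (by norm_num) |>.mp h'')
  · exact hb h'
end

section
/- Let q = 2^ℓ, let a ∈ 𝔽_q with a ≠ 0, let d > 1 be an integer, and let b_1, …, b_d ∈ 𝔽_q with b_d ≠ 0. Then the polynomial (X2 + X4)² + a·(X1 + X3)·(X2 + X4) + (X1 + X3)·Σ_{i=1}^{d} b_i·(X1^i + X3^i) is irreducible in \bar{𝔽}_q[X1, X2, X3, X4], where \bar{𝔽}_q is an algebraic closure of 𝔽_q. -/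
/-!
As a polynomial in `X 3` over `K[X 0, X 1, X 2]` the polynomial is a monic quadratic
`Y ^ 2 + A Y + B`, so a factorisation has the form `(Y + c₁) (Y + c₂)` with `c₁ c₂ = B` and
`c₁ + c₂ = A`. Specialising `X 0 ↦ t ^ 2, X 1 ↦ 0, X 2 ↦ t ^ 3` yields `v, w ∈ K[t]` with
`v + w = a (t ^ 2 + t ^ 3)` and `v w = P := (t ^ 2 + t ^ 3) ∑ bᵢ (t ^ (2i) + t ^ (3i))`; in
characteristic 2 this says `v ^ 2 + a (t ^ 2 + t ^ 3) v = P`. Comparing degrees shows that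
`a (t ^ 2 + t ^ 3) v` has degree below `3d + 2`, so the coefficient of `P` at the odd one of
`3d + 2, 3d + 3`, which is `b d`, would have to come from `v ^ 2`, whose odd coefficients vanish.
-/

namespace Polynomial

variable {R : Type*}

theorem coeff_sq_eq_zero_of_odd [CommSemiring R] [CharP R 2] (u : R[X]) {n : ℕ} (hn : Odd n) :
    (u ^ 2).coeff n = 0 := by
  rw [← map_frobenius_expand 2 u, coeff_map, coeff_expand two_pos,
    if_neg hn.not_two_dvd_nat, map_zero]

theorem coeff_eq_zero_of_sq_add_mul_eq [CommSemiring R] [NoZeroDivisors R] [CharP R 2]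
    {L v P : R[X]} (h : v ^ 2 + L * v = P) {n : ℕ} (hn : Odd n) (hL : 2 * L.natDegree < n)
    (hP : 2 * L.natDegree + P.natDegree < 2 * n) : P.coeff n = 0 := by
  have hdeg : L.natDegree + v.natDegree < n := by
    rcases le_or_gt v.natDegree L.natDegree with hv | hv
    · omega
    · have hLv : (L * v).natDegree < (v ^ 2).natDegree := by
        rw [natDegree_pow]
        exact natDegree_mul_le.trans_lt (by omega)
      have hPv := natDegree_add_eq_left_of_natDegree_lt hLv
      rw [h, natDegree_pow] at hPv
      omega
  rw [← h, coeff_add, coeff_sq_eq_zero_of_odd v hn,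
    coeff_eq_zero_of_natDegree_lt (natDegree_mul_le.trans_lt hdeg), add_zero]

theorem irreducible_X_sq_add_C_mul_X_add_C [CommRing R] [IsDomain R] {A B : R}
    (h : ∀ c₁ c₂ : R, c₁ * c₂ = B → c₁ + c₂ ≠ A) : Irreducible (X ^ 2 + C A * X + C B) := by
  have hmonic : (X ^ 2 + C A * X + C B).Monic := by
    rw [add_assoc]
    exact monic_X_pow_add (degree_linear_le.trans_lt (by norm_num))
  have hdeg : (X ^ 2 + C A * X + C B).natDegree = 2 := by
    simpa using natDegree_quadratic (R := R) (a := 1) (b := A) (c := B) one_ne_zero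
  by_contra hred
  obtain ⟨c₁, c₂, hB, hA⟩ := (hmonic.not_irreducible_iff_exists_add_mul_eq_coeff hdeg).mp hred
  exact h c₁ c₂ (by simpa using hB.symm) (by simpa using hA.symm)

theorem coeff_X_sq_add_X_cube_mul_sum [CommSemiring R] (β : ℕ → R) {d n : ℕ} (hd : 1 < d)
    (hn₁ : 3 * d + 2 ≤ n) (hn₂ : n ≤ 3 * d + 3) :
    ((X ^ 2 + X ^ 3) * ∑ i ∈ Finset.Icc 1 d, C (β i) * (X ^ (2 * i) + X ^ (3 * i))).coeff n
      = β d := by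
  simp only [Finset.mul_sum, finsetSum_coeff, mul_left_comm _ (C _), coeff_C_mul, add_mul,
    mul_add, ← pow_add, coeff_add, coeff_X_pow]
  rw [Finset.sum_eq_single_of_mem d (Finset.mem_Icc.mpr ⟨by omega, le_rfl⟩)]
  · split_ifs <;> first | omega | simp
  · intro i hi hne
    simp only [Finset.mem_Icc] at hi
    split_ifs <;> first | omega | simp

theorem natDegree_X_sq_add_X_cube_mul_sum_le [CommSemiring R] (β : ℕ → R) (d : ℕ) :
    ((X ^ 2 + X ^ 3) * ∑ i ∈ Finset.Icc 1 d, C (β i) * (X ^ (2 * i) + X ^ (3 * i))).natDegree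
      ≤ 3 * d + 3 := by
  refine natDegree_mul_le.trans
    (add_le_add (?_ : _ ≤ 3) (?_ : _ ≤ 3 * d) |>.trans_eq (by ring))
  · exact (natDegree_add_le _ _).trans
      (max_le ((natDegree_X_pow_le 2).trans (by norm_num)) (natDegree_X_pow_le 3))
  · refine natDegree_sum_le_of_forall_le _ _ fun i hi => ?_
    simp only [Finset.mem_Icc] at hi
    exact natDegree_C_mul_le _ _ |>.trans <| (natDegree_add_le _ _).trans <|
      max_le ((natDegree_X_pow_le _).trans (by omega)) ((natDegree_X_pow_le _).trans (by omega))

theorem add_ne_of_mul_eq_X_sq_add_X_cube_mul_sum [CommRing R] [IsDomain R] [CharP R 2] (a : R)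
    (β : ℕ → R) {d : ℕ} (hd : 1 < d) (hβ : β d ≠ 0) {v w : R[X]}
    (hvw : v * w = (X ^ 2 + X ^ 3) * ∑ i ∈ Finset.Icc 1 d, C (β i) * (X ^ (2 * i) + X ^ (3 * i))) :
    v + w ≠ C a * (X ^ 2 + X ^ 3) := by
  intro hsum
  have hP := natDegree_X_sq_add_X_cube_mul_sum_le β d
  set P := (X ^ 2 + X ^ 3) * ∑ i ∈ Finset.Icc 1 d, C (β i) * (X ^ (2 * i) + X ^ (3 * i))
  have hL : (C a * (X ^ 2 + X ^ 3) : R[X]).natDegree ≤ 3 :=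
    (natDegree_C_mul_le _ _).trans ((natDegree_add_le _ _).trans (by simp))
  have hv : v ^ 2 + C a * (X ^ 2 + X ^ 3) * v = P := by
    rw [← hsum, ← hvw]
    linear_combination (v ^ 2) * CharTwo.two_eq_zero (R := R[X])
  obtain ⟨n, hodd, hn₁, hn₂⟩ : ∃ n, Odd n ∧ 3 * d + 2 ≤ n ∧ n ≤ 3 * d + 3 := by
    rcases Nat.even_or_odd d with ⟨k, rfl⟩ | ⟨k, rfl⟩
    · exact ⟨3 * (k + k) + 3, ⟨3 * k + 1, by ring⟩, by omega, le_rfl⟩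
    · exact ⟨3 * (2 * k + 1) + 2, ⟨3 * k + 2, by ring⟩, le_rfl, by omega⟩
  refine hβ ?_
  rw [← coeff_X_sq_add_X_cube_mul_sum β hd hn₁ hn₂]
  exact coeff_eq_zero_of_sq_add_mul_eq hv hodd (by omega) (by omega)

end Polynomial

namespace MvPolynomial

variable (R : Type*) [CommSemiring R] (n : ℕ)

noncomputable def lastVarEquiv :
    MvPolynomial (Fin (n + 1)) R ≃ₐ[R] Polynomial (MvPolynomial (Fin n) R) :=
  (renameEquiv R finSuccEquivLast).trans (optionEquivLeft R (Fin n))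

variable {R n}

@[simp] theorem lastVarEquiv_X_last : lastVarEquiv R n (X (Fin.last n)) = Polynomial.X := by
  simp [lastVarEquiv]

@[simp] theorem lastVarEquiv_X_castSucc (i : Fin n) :
    lastVarEquiv R n (X i.castSucc) = Polynomial.C (X i) := by
  simp [lastVarEquiv]

@[simp] theorem lastVarEquiv_C (r : R) : lastVarEquiv R n (C r) = Polynomial.C (C r) := by
  simp [lastVarEquiv]

theorem irreducible_sq_add_C_mul_add_mul_sum_of_charP_two {K : Type*} [CommRing K] [IsDomain K]
    [CharP K 2] (a : K) {d : ℕ} (hd : 1 < d) (β : ℕ → K) (hβ : β d ≠ 0) :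
    Irreducible (((X 1 + X 3) ^ 2 + C a * (X 0 + X 2) * (X 1 + X 3)
      + (X 0 + X 2) * ∑ i ∈ Finset.Icc 1 d, C (β i) * (X 0 ^ i + X 2 ^ i))
      : MvPolynomial (Fin 4) K) := by
  have e0 : lastVarEquiv K 3 (X 0) = .C (X 0) := lastVarEquiv_X_castSucc 0
  have e1 : lastVarEquiv K 3 (X 1) = .C (X 1) := lastVarEquiv_X_castSucc 1
  have e2 : lastVarEquiv K 3 (X 2) = .C (X 2) := lastVarEquiv_X_castSucc 2
  have e3 : lastVarEquiv K 3 (X 3) = .X := lastVarEquiv_X_last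
  refine (MulEquiv.irreducible_iff (lastVarEquiv K 3)).mp ?_
  convert Polynomial.irreducible_X_sq_add_C_mul_X_add_C (R := MvPolynomial (Fin 3) K)
    (A := C a * (X 0 + X 2) + 2 * X 1)
    (B := X 1 ^ 2 + C a * (X 0 + X 2) * X 1
      + (X 0 + X 2) * ∑ i ∈ Finset.Icc 1 d, C (β i) * (X 0 ^ i + X 2 ^ i)) ?_ using 1
  · simp only [map_add, map_mul, map_pow, map_sum, map_ofNat, lastVarEquiv_C, e0, e1, e2, e3]
    ring
  intro c₁ c₂ hB hA
  let φ := aeval (R := K) ![(Polynomial.X : Polynomial K) ^ 2, 0, Polynomial.X ^ 3]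
  refine Polynomial.add_ne_of_mul_eq_X_sq_add_X_cube_mul_sum a β hd hβ (v := φ c₁) (w := φ c₂)
    ?_ ?_
  · rw [← map_mul, hB]
    simp [φ, ← pow_mul]
  · rw [← map_add, hA]
    simp [φ]

end MvPolynomial

open MvPolynomial Finset

theorem stmt_18_general
    (F : Type) [Field F] [CharP F 2]
    (a : F) (d : ℕ) (hd : 1 < d)
    (b : ℕ → F) (hbd : b d ≠ 0) :
    Irreducible
      (((X 1 + X 3) ^ 2
        + C (algebraMap F (AlgebraicClosure F) a) * (X 0 + X 2) * (X 1 + X 3)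
        + (X 0 + X 2) * ∑ i ∈ Finset.Icc 1 d,
            C (algebraMap F (AlgebraicClosure F) (b i)) * (X 0 ^ i + X 2 ^ i))
        : MvPolynomial (Fin 4) (AlgebraicClosure F)) :=
  irreducible_sq_add_C_mul_add_mul_sum_of_charP_two _ hd _ ((map_ne_zero _).mpr hbd)

/-- Variables: `X 0 = X1`, `X 1 = X2`, `X 2 = X3`, `X 3 = X4`. -/
theorem stmt_18
    (ℓ : ℕ) (hℓ : 0 < ℓ)
    (F : Type) [Field F] [Fintype F] [CharP F 2]
    (hcard : Fintype.card F = 2 ^ ℓ)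
    (a : F) (ha : a ≠ 0) (d : ℕ) (hd : 1 < d)
    (b : ℕ → F) (hbd : b d ≠ 0) :
    Irreducible
      (((X 1 + X 3) ^ 2
        + C (algebraMap F (AlgebraicClosure F) a) * (X 0 + X 2) * (X 1 + X 3)
        + (X 0 + X 2) * ∑ i ∈ Finset.Icc 1 d,
            C (algebraMap F (AlgebraicClosure F) (b i)) * (X 0 ^ i + X 2 ^ i))
        : MvPolynomial (Fin 4) (AlgebraicClosure F)) :=
  stmt_18_general F a d hd b hbd
end

section
/- Let q = 2^ℓ, let d2 > d1 > 1 be integers with d2 + 1 > 2·d1, let a_1, …, a_{d1} ∈ 𝔽_q with a_{d1} ≠ 0, and let b_1, …, b_{d2} ∈ 𝔽_q with b_{d2} ≠ 0. Then the polynomial (X2 + X4)² + (X2 + X4)·Σ_{i=1}^{d1} a_i·(X1^i + X3^i) + (X1 + X3)·Σ_{i=1}^{d2} b_i·(X1^i + X3^i) is irreducible in \bar{𝔽}_q[X1, X2, X3, X4], where \bar{𝔽}_q is an algebraic closure of 𝔽_q. -/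
/-!
View the polynomial as a monic quadratic in `X₄` over `K[X₁, X₂, X₃]`: in characteristic 2,
`(X₂ + X₄)² = X₂² + X₄²`, so it is `X₄² + A X₄ + (X₂² + X₂ A + (X₁ + X₃) B)` with
`A = ∑ aᵢ (X₁ⁱ + X₃ⁱ)` and `B = ∑ bᵢ (X₁ⁱ + X₃ⁱ)`. Over a domain such a quadratic is irreducible
unless it has a root `r`. Specialising `X₁ ↦ S`, `X₂ ↦ 0`, `X₃ ↦ T S` turns a root into a solution
of `r² + A' r + C' = 0` in `K[T][S]`, where `A'` has `S`-degree at most `d₁` and `C'` has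
`S`-degree `d₂ + 1` with top coefficient `b_{d₂} (1 + T) (1 + T^{d₂})`. As `2 d₁ < d₂ + 1`, comparing
top coefficients makes this a square in `K[T]`; but squares in characteristic 2 have no `T`-term,
while this one has `T`-coefficient `b_{d₂} ≠ 0`.
-/

open scoped Polynomial

namespace Polynomial

section IsDomain

variable {R : Type*} [CommRing R] [IsDomain R]

theorem irreducible_X_sq_add_C_mul_X_add_C_s19 {a c : R} (h : ∀ r : R, r ^ 2 + a * r + c ≠ 0) :
    Irreducible (X ^ 2 + C a * X + C c : R[X]) := by
  have hmonic : (X ^ 2 + C a * X + C c : R[X]).Monic := by monicity!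
  have hdeg : (X ^ 2 + C a * X + C c : R[X]).natDegree = 2 := by compute_degree!
  rw [hmonic.irreducible_iff_roots_eq_zero_of_degree_le_three hdeg.ge (by omega)]
  refine Multiset.eq_zero_of_forall_notMem fun r hr ↦ h r ?_
  simpa [sq] using (mem_roots hmonic.ne_zero).1 hr

theorem sq_add_mul_add_ne_zero {A B : R[X]} {d m : ℕ} (hA : A.natDegree ≤ d)
    (hB : B.natDegree ≤ m) (hdm : 2 * d < m) (hsq : ∀ s, s ^ 2 + B.coeff m ≠ 0) (r : R[X]) :
    r ^ 2 + A * r + B ≠ 0 := by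
  intro hr
  set n := r.natDegree
  have hcoeff (k : ℕ) : (r ^ 2).coeff k + (A * r).coeff k + B.coeff k = 0 := by
    simpa using congrArg (coeff · k) hr
  have hr2 : (r ^ 2).natDegree ≤ 2 * n := natDegree_pow_le_of_le 2 le_rfl
  have hAr : (A * r).natDegree ≤ d + n := natDegree_mul_le_of_le hA le_rfl
  rcases lt_or_ge (2 * n) m with hlt | hle
  · have hm := hcoeff m
    rw [coeff_eq_zero_of_natDegree_lt (hr2.trans_lt hlt),
      coeff_eq_zero_of_natDegree_lt (hAr.trans_lt (by omega)), zero_add, zero_add] at hm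
    exact hsq 0 (by simpa using hm)
  · have htop := hcoeff (2 * n)
    rw [coeff_pow_of_natDegree_le le_rfl,
      coeff_eq_zero_of_natDegree_lt (hAr.trans_lt (by omega)), add_zero] at htop
    rcases hle.eq_or_lt with heq | hgt
    · exact hsq _ (heq ▸ htop)
    · rw [coeff_eq_zero_of_natDegree_lt (hB.trans_lt hgt), add_zero, pow_eq_zero_iff two_ne_zero,
        coeff_natDegree, leadingCoeff_eq_zero] at htop
      simp [n, htop] at hgt

end IsDomain

theorem coeff_sq_one_eq_zero {R : Type*} [CommRing R] [CharP R 2] (s : R[X]) :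
    (s ^ 2).coeff 1 = 0 := by
  rw [← map_frobenius_expand, coeff_map, coeff_expand two_pos]
  simp

end Polynomial

namespace MvPolynomial

variable (R : Type*) [CommSemiring R] (n : ℕ)

noncomputable def finSuccEquivLast :
    MvPolynomial (Fin (n + 1)) R ≃ₐ[R] (MvPolynomial (Fin n) R)[X] :=
  (renameEquiv R _root_.finSuccEquivLast).trans (optionEquivLeft R (Fin n))

variable {R n}

theorem finSuccEquivLast_X_castSucc (i : Fin n) :
    finSuccEquivLast R n (X i.castSucc) = Polynomial.C (X i) := by
  simp [finSuccEquivLast, _root_.finSuccEquivLast_castSucc, optionEquivLeft_X_some]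

theorem finSuccEquivLast_X_last : finSuccEquivLast R n (X (Fin.last n)) = Polynomial.X := by
  rw [finSuccEquivLast, AlgEquiv.trans_apply, renameEquiv_apply, rename_X,
    _root_.finSuccEquivLast_last, optionEquivLeft_X_none]

end MvPolynomial

section PairPowSum

open Polynomial

variable {K R S : Type*} [CommSemiring K] [CommSemiring R] [Algebra K R] [CommSemiring S]
  [Algebra K S]

noncomputable def pairPowSum (c : ℕ → K) (n : ℕ) (x y : R) : R :=
  ∑ i ∈ Finset.Icc 1 n, algebraMap K R (c i) * (x ^ i + y ^ i)

theorem map_pairPowSum {F : Type*} [FunLike F R S] [AlgHomClass F K R S] (φ : F) (c : ℕ → K)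
    (n : ℕ) (x y : R) : φ (pairPowSum c n x y) = pairPowSum c n (φ x) (φ y) := by
  simp [pairPowSum, AlgHomClass.commutes]

theorem pairPowSum_X_C_mul_X (c : ℕ → K) (n : ℕ) (t : R) :
    pairPowSum c n (X : R[X]) (C t * X) =
      ∑ i ∈ Finset.Icc 1 n, C (algebraMap K R (c i) * (1 + t ^ i)) * X ^ i := by
  simp only [pairPowSum, mul_pow, ← C_pow, Polynomial.algebraMap_apply]
  refine Finset.sum_congr rfl fun i _ ↦ ?_
  simp only [C_mul, C_add, C_1]
  ring

theorem natDegree_pairPowSum_X_C_mul_X_le (c : ℕ → K) (n : ℕ) (t : R) :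
    (pairPowSum c n (X : R[X]) (C t * X)).natDegree ≤ n := by
  rw [pairPowSum_X_C_mul_X]
  exact natDegree_sum_le_of_forall_le _ _ fun i hi ↦
    (natDegree_C_mul_X_pow_le _ _).trans (Finset.mem_Icc.1 hi).2

theorem coeff_pairPowSum_X_C_mul_X {c : ℕ → K} {n : ℕ} (hn : 1 ≤ n) (t : R) :
    (pairPowSum c n (X : R[X]) (C t * X)).coeff n = algebraMap K R (c n) * (1 + t ^ n) := by
  rw [pairPowSum_X_C_mul_X, finsetSum_coeff]
  simp only [coeff_C_mul_X_pow, Finset.sum_ite_eq, Finset.mem_Icc, hn, le_rfl, and_self, if_true]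

end PairPowSum

section CharTwo

variable {K : Type*} [CommRing K] [IsDomain K] [CharP K 2] {d1 d2 : ℕ} (a b : ℕ → K)

namespace Polynomial

theorem sq_add_pairPowSum_mul_add_ne_zero (hd2 : 2 ≤ d2) (hdeg : 2 * d1 < d2 + 1)
    (hb : b d2 ≠ 0) (r : K[X][X]) :
    r ^ 2 + pairPowSum a d1 (X : K[X][X]) (C X * X) * r +
      (X + C X * X) * pairPowSum b d2 (X : K[X][X]) (C X * X) ≠ 0 := by
  have hB : (X + C X * X) * pairPowSum b d2 (X : K[X][X]) (C X * X) =
      C (1 + X) * (X * pairPowSum b d2 (X : K[X][X]) (C X * X)) := by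
    simp only [C_add, C_1]
    ring
  rw [hB]
  refine sq_add_mul_add_ne_zero (natDegree_pairPowSum_X_C_mul_X_le a d1 _) ?_ hdeg ?_ r
  · exact (natDegree_C_mul_le _ _).trans <| (natDegree_mul_le_of_le natDegree_X_le
      (natDegree_pairPowSum_X_C_mul_X_le b d2 _)).trans_eq (add_comm _ _)
  · intro s hs
    rw [coeff_C_mul, coeff_X_mul, coeff_pairPowSum_X_C_mul_X (by omega)] at hs
    have h1 := congrArg (coeff · 1) hs
    simp [coeff_sq_one_eq_zero, mul_add, add_mul, coeff_X_pow, show 1 ≠ d2 by omega,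
      show 0 ≠ d2 by omega, hb] at h1

end Polynomial

namespace MvPolynomial

theorem sq_add_pairPowSum_mul_add_ne_zero (hd2 : 2 ≤ d2) (hdeg : 2 * d1 < d2 + 1)
    (hb : b d2 ≠ 0) (r : MvPolynomial (Fin 3) K) :
    r ^ 2 + pairPowSum a d1 (X 0) (X 2) * r
      + (X 1 ^ 2 + X 1 * pairPowSum a d1 (X 0) (X 2)
        + (X 0 + X 2) * pairPowSum b d2 (X 0) (X 2)) ≠ 0 := by
  intro hr
  have hspec := congrArg
    (aeval ![(Polynomial.X : K[X][X]), 0, Polynomial.C Polynomial.X * Polynomial.X]) hr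
  simp only [map_add, map_mul, map_pow, map_pairPowSum, aeval_X, Matrix.cons_val, map_zero,
    zero_pow two_ne_zero, zero_mul, zero_add] at hspec
  exact Polynomial.sq_add_pairPowSum_mul_add_ne_zero a b hd2 hdeg hb _ hspec

theorem irreducible_sq_add_mul_pairPowSum_add_mul_pairPowSum (hd2 : 2 ≤ d2)
    (hdeg : 2 * d1 < d2 + 1) (hb : b d2 ≠ 0) :
    Irreducible ((X 1 + X 3) ^ 2 + (X 1 + X 3) * pairPowSum a d1 (X 0) (X 2)
      + (X 0 + X 2) * pairPowSum b d2 (X 0) (X 2) : MvPolynomial (Fin 4) K) := by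
  have hX0 : finSuccEquivLast K 3 (X 0) = Polynomial.C (X 0) := finSuccEquivLast_X_castSucc 0
  have hX1 : finSuccEquivLast K 3 (X 1) = Polynomial.C (X 1) := finSuccEquivLast_X_castSucc 1
  have hX2 : finSuccEquivLast K 3 (X 2) = Polynomial.C (X 2) := finSuccEquivLast_X_castSucc 2
  have hX3 : finSuccEquivLast K 3 (X 3) = Polynomial.X := finSuccEquivLast_X_last
  have hsum (c : ℕ → K) (n : ℕ) : finSuccEquivLast K 3 (pairPowSum c n (X 0) (X 2)) =
      Polynomial.C (pairPowSum c n (X 0) (X 2)) := by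
    rw [map_pairPowSum, hX0, hX2]
    exact (map_pairPowSum (Polynomial.CAlgHom (R := K)) c n (X 0) (X 2)).symm
  rw [← MulEquiv.irreducible_iff (finSuccEquivLast K 3)]
  convert Polynomial.irreducible_X_sq_add_C_mul_X_add_C_s19
    (sq_add_pairPowSum_mul_add_ne_zero a b hd2 hdeg hb) using 1
  simp only [map_add, map_mul, map_pow, hsum, hX0, hX1, hX2, hX3, CharTwo.add_sq]
  ring

end MvPolynomial

end CharTwo

open MvPolynomial Finset

theorem stmt_19_general
    (F : Type) [Field F] [CharP F 2]
    (d1 d2 : ℕ) (hd1 : 1 < d1) (hdeg : 2 * d1 < d2 + 1)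
    (a : ℕ → F)
    (b : ℕ → F) (hbd2 : b d2 ≠ 0) :
    Irreducible
      (((X 1 + X 3) ^ 2
        + (X 1 + X 3) * ∑ i ∈ Finset.Icc 1 d1,
            C (algebraMap F (AlgebraicClosure F) (a i)) * (X 0 ^ i + X 2 ^ i)
        + (X 0 + X 2) * ∑ i ∈ Finset.Icc 1 d2,
            C (algebraMap F (AlgebraicClosure F) (b i)) * (X 0 ^ i + X 2 ^ i))
        : MvPolynomial (Fin 4) (AlgebraicClosure F)) := by
  have : CharP (AlgebraicClosure F) 2 :=
    charP_of_injective_algebraMap (algebraMap F _).injective 2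
  exact irreducible_sq_add_mul_pairPowSum_add_mul_pairPowSum (algebraMap F _ ∘ a)
    (algebraMap F _ ∘ b) (by omega) hdeg ((map_ne_zero _).2 hbd2)

/-- Variables: `X 0 = X1`, `X 1 = X2`, `X 2 = X3`, `X 3 = X4`. -/
theorem stmt_19
    (ℓ : ℕ) (hℓ : 0 < ℓ)
    (F : Type) [Field F] [Fintype F] [CharP F 2]
    (hcard : Fintype.card F = 2 ^ ℓ)
    (d1 d2 : ℕ) (hd1 : 1 < d1) (hd2 : d1 < d2) (hdeg : 2 * d1 < d2 + 1)
    (a : ℕ → F) (had1 : a d1 ≠ 0)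
    (b : ℕ → F) (hbd2 : b d2 ≠ 0) :
    Irreducible
      (((X 1 + X 3) ^ 2
        + (X 1 + X 3) * ∑ i ∈ Finset.Icc 1 d1,
            C (algebraMap F (AlgebraicClosure F) (a i)) * (X 0 ^ i + X 2 ^ i)
        + (X 0 + X 2) * ∑ i ∈ Finset.Icc 1 d2,
            C (algebraMap F (AlgebraicClosure F) (b i)) * (X 0 ^ i + X 2 ^ i))
        : MvPolynomial (Fin 4) (AlgebraicClosure F)) :=
  stmt_19_general F d1 d2 hd1 hdeg a b hbd2
end
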